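/- The zeros of φ_n^α all lie in 𝔻 and the zeros of φ_n^{α*} all lie in 𝔼; the zeros of φ_n^β all lie in 𝔼 and the zeros of φ_n^{β*} all lie in 𝔻. Moreover, if γ_n = α_n then the zeros of φ_n coincide with the zeros of φ_n^α and hence all lie in 𝔻, while if γ_n = β_n the zeros of φ_n coincide with the zeros of φ_n^β and hence all lie in 𝔼. -/

import Mathlib

/-!
Let `z₀` be a zero of the numerator `p` of `φ_{m+1} = p / (π_m ϖ_{m+1})`, with
`ϖ_{m+1}(z) = u - v z`. Writing `p = (z - z₀) q` and testing the orthogonality of `φ_{m+1}` to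
`L_m` against `q / π_m` gives, on `𝕋`, `∫ (z̄ - z̄₀)(u - v z) dν = 0` for the weight
`dν = |q / π_{m+1}|² dμ`. With `m₀`, `m₁` the mass and first moment of `ν` (so `‖m₁‖ < m₀`) this
reads `z̄₀ (u m₀ - v m₁) = u m̄₁ - v m₀`, and
`|u m₀ - v m₁|² - |u m̄₁ - v m₀|² = (|u|² - |v|²)(m₀² - |m₁|²)` puts `z₀` in `𝔻` when
`|v| < |u|` (pole `α_{m+1}`) and in `𝔼` when `|u| < |v|` (pole `β_{m+1}`). The superstar
numerators have the reflected zeros `1 / z̄₀`.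

On `𝕋` the moduli `|π_m|` for different pole sequences are proportional, so `φ_{m+1}^α` (or
`φ_{m+1}^β`) is also orthogonal to the `L_m` of the `γ`-sequence; as `L_{m+1} ⊖ L_m` is
one-dimensional, the numerator of `φ_{m+1}` is a nonzero multiple of that of `φ_{m+1}^α` (or
`φ_{m+1}^β`).
-/

noncomputable section
open MeasureTheory
open scoped Classical

namespace ORF

/-- complex conjugation -/
def conj' (z : ℂ) : ℂ := (starRingEnd ℂ) z

/-- membership in the unit circle 𝕋 -/
def onT (z : ℂ) : Prop := ‖z‖ = 1

/-- `z` is a (strictly) positive real number -/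
def posR (z : ℂ) : Prop := 0 < z.re ∧ z.im = 0

/-- σ_j = conj(α_j)/|α_j| (σ_j = 1 if α_j = 0, i.e. if β_j = ∞) -/
def sig (α : ℕ → ℂ) (j : ℕ) : ℂ :=
  if α j = 0 then 1 else conj' (α j) / (‖α j‖ : ℂ)

/-- ς_n = ∏_{j=1}^n σ_j -/
def sigProd (α : ℕ → ℂ) (n : ℕ) : ℂ := ∏ j ∈ Finset.Icc 1 n, sig α j

/-- ϖ_j^α(z) = 1 − conj(α_j)·z, as a polynomial in z -/
def wA (α : ℕ → ℂ) (j : ℕ) : Polynomial ℂ :=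
  1 - Polynomial.C (conj' (α j)) * Polynomial.X

/-- ϖ_j^β(z) = 1 − conj(β_j)·z = 1 − z/α_j, and −z when β_j = ∞ (α_j = 0) -/
def wB (α : ℕ → ℂ) (j : ℕ) : Polynomial ℂ :=
  if α j = 0 then -Polynomial.X else 1 - Polynomial.C (α j)⁻¹ * Polynomial.X

/-- ϖ_j = ϖ_j^γ (γ_j = α_j when `c j`, γ_j = β_j otherwise) -/
def wG (α : ℕ → ℂ) (c : ℕ → Bool) (j : ℕ) : Polynomial ℂ :=
  if c j then wA α j else wB α j

/-- π_n^α -/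
def piA (α : ℕ → ℂ) (n : ℕ) : Polynomial ℂ := ∏ j ∈ Finset.Icc 1 n, wA α j
/-- π_n^β -/
def piB (α : ℕ → ℂ) (n : ℕ) : Polynomial ℂ := ∏ j ∈ Finset.Icc 1 n, wB α j
/-- π_n = π_n^γ -/
def piG (α : ℕ → ℂ) (c : ℕ → Bool) (n : ℕ) : Polynomial ℂ := ∏ j ∈ Finset.Icc 1 n, wG α c j

/-- 𝕒_n = {1 ≤ j ≤ n : γ_j = α_j} -/
def aSet (c : ℕ → Bool) (n : ℕ) : Finset ℕ := (Finset.Icc 1 n).filter (fun j => c j = true)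
/-- 𝕓_n = {1 ≤ j ≤ n : γ_j = β_j} -/
def bSet (c : ℕ → Bool) (n : ℕ) : Finset ℕ := (Finset.Icc 1 n).filter (fun j => c j = false)

/-- Blaschke factor ζ_j^α -/
def zetaA (α : ℕ → ℂ) (j : ℕ) (z : ℂ) : ℂ :=
  if α j = 0 then z else sig α j * (z - α j) / (1 - conj' (α j) * z)

/-- Blaschke factor ζ_j^β (β_j = 1/conj(α_j); ζ_j^β(z) = 1/z when β_j = ∞) -/
def zetaB (α : ℕ → ℂ) (j : ℕ) (z : ℂ) : ℂ :=
  if α j = 0 then z⁻¹ else sig α j * (z - (conj' (α j))⁻¹) / (1 - z / α j)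

/-- ζ_j = ζ_j^γ -/
def zetaG (α : ℕ → ℂ) (c : ℕ → Bool) (j : ℕ) (z : ℂ) : ℂ :=
  if c j then zetaA α j z else zetaB α j z

/-- B_n^α -/
def BA (α : ℕ → ℂ) (n : ℕ) (z : ℂ) : ℂ := ∏ j ∈ Finset.Icc 1 n, zetaA α j z
/-- B_n^β -/
def BB (α : ℕ → ℂ) (n : ℕ) (z : ℂ) : ℂ := ∏ j ∈ Finset.Icc 1 n, zetaB α j z
/-- B̌_n^α = ∏_{j ∈ 𝕒_n} ζ_j -/
def BcA (α : ℕ → ℂ) (c : ℕ → Bool) (n : ℕ) (z : ℂ) : ℂ := ∏ j ∈ aSet c n, zetaG α c j z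
/-- B̌_n^β = ∏_{j ∈ 𝕓_n} ζ_j -/
def BcB (α : ℕ → ℂ) (c : ℕ → Bool) (n : ℕ) (z : ℂ) : ℂ := ∏ j ∈ bSet c n, zetaG α c j z

/-- ζ̌_n^α (= ζ_n if γ_n = α_n, = 1 otherwise) -/
def zcA (α : ℕ → ℂ) (c : ℕ → Bool) (n : ℕ) (z : ℂ) : ℂ :=
  if c n then zetaG α c n z else 1
/-- ζ̌_n^β (= ζ_n if γ_n = β_n, = 1 otherwise) -/
def zcB (α : ℕ → ℂ) (c : ℕ → Bool) (n : ℕ) (z : ℂ) : ℂ :=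
  if c n then 1 else zetaG α c n z

/-- The space L_n^ν = {p/π_n^ν : deg p ≤ n}; a function `f` belongs to it if it agrees
with such a rational function on the unit circle (where all these objects live). -/
def Lsp (pip : ℕ → Polynomial ℂ) (n : ℕ) : Set (ℂ → ℂ) :=
  {f | ∃ p : Polynomial ℂ, p.natDegree ≤ n ∧ ∀ z, onT z → f z = p.eval z / (pip n).eval z}

/-- L_{n*}^ν = {f_* : f ∈ L_n^ν} (again as functions on the unit circle, where
f_*(z) = conj(f(1/conj z)) = conj(f(z))) -/
def LstarSp (pip : ℕ → Polynomial ℂ) (n : ℕ) : Set (ℂ → ℂ) :=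
  {f | ∃ p : Polynomial ℂ, p.natDegree ≤ n ∧ ∀ z, onT z → f z = conj' (p.eval z / (pip n).eval z)}

/-- R_n^ν = L_n^ν · L_{n*}^ν -/
def Rset (pip : ℕ → Polynomial ℂ) (n : ℕ) : Set (ℂ → ℂ) :=
  {h | ∃ g ∈ Lsp pip n, ∃ k ∈ LstarSp pip n, ∀ z, onT z → h z = g z * k z}

/-- the substar conjugate f_*(z) = conj(f(1/conj z)) -/
def substar (f : ℂ → ℂ) : ℂ → ℂ := fun z => conj' (f ((conj' z)⁻¹))

/-- superstar conjugate q^*(z) = z^n conj(q(1/conj z)) of a polynomial of degree ≤ n -/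
def pstar (n : ℕ) (q : Polynomial ℂ) : Polynomial ℂ :=
  ∑ k ∈ Finset.range (n + 1), Polynomial.C (conj' (q.coeff k)) * Polynomial.X ^ (n - k)

/-- the inner product ⟨f,g⟩ = ∫ conj(f) g dμ -/
def inn (μ : Measure ℂ) (f g : ℂ → ℂ) : ℂ := ∫ z, conj' (f z) * g z ∂μ

/-- the reciprocal ORF φ_n^{ν*} = B_n^ν (φ_n^ν)_* (resp. φ_n^* = B̌_n^α B̌_n^β (φ_n)_*),
written out as the rational function ς_n p_n^{ν*}/π_n^ν -/
def starF (α : ℕ → ℂ) (pip : ℕ → Polynomial ℂ) (p : ℕ → Polynomial ℂ) (n : ℕ) (z : ℂ) : ℂ :=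
  sigProd α n * (pstar n (p n)).eval z / (pip n).eval z

/-- `μ` is a probability measure on the unit circle 𝕋, positive a.e. on 𝕋 -/
structure CircleMeasure (μ : Measure ℂ) : Prop where
  prob : IsProbabilityMeasure μ
  circ : μ {z | ¬ onT z} = 0
  pos : ∀ U : Set ℂ, IsOpen U → (U ∩ {z | onT z}).Nonempty → 0 < μ U

/-- `φ` (with numerators `p`) is the sequence of orthonormal rational functions for the
nested spaces `Lsp pip`: φ_0 = 1, φ_n = p_n/π_n ∈ L_n \ L_{n-1}, φ_n ⊥ L_{n-1}, ‖φ_n‖ = 1. -/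
structure IsORF (μ : Measure ℂ) (pip : ℕ → Polynomial ℂ) (φ : ℕ → ℂ → ℂ)
    (p : ℕ → Polynomial ℂ) : Prop where
  rep : ∀ n z, φ n z = (p n).eval z / (pip n).eval z
  deg : ∀ n, (p n).natDegree ≤ n
  p0 : p 0 = 1
  notmem : ∀ n, 1 ≤ n → φ n ∉ Lsp pip (n - 1)
  orth : ∀ n, 1 ≤ n → ∀ f ∈ Lsp pip (n - 1), inn μ (φ n) f = 0
  norm : ∀ n, inn μ (φ n) (φ n) = 1

/-- normalization φ_n^{α*}(α_n) > 0 -/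
def normA (α : ℕ → ℂ) (p : ℕ → Polynomial ℂ) (n : ℕ) : Prop :=
  posR (sigProd α n * (pstar n (p n)).eval (α n) / (piA α n).eval (α n))

/-- normalization φ_n^{β*}(β_n) > 0 (when β_n = ∞ the value is the limit,
i.e. the ratio of the coefficients of z^n) -/
def normB (α : ℕ → ℂ) (p : ℕ → Polynomial ℂ) (n : ℕ) : Prop :=
  if α n = 0 then posR (sigProd α n * (pstar n (p n)).coeff n / (piB α n).coeff n)
  else posR (sigProd α n * (pstar n (p n)).eval ((conj' (α n))⁻¹) /
    (piB α n).eval ((conj' (α n))⁻¹))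

/-- π̌_n^α = ∏_{j∈𝕒_n} ϖ_j -/
def pidA (α : ℕ → ℂ) (c : ℕ → Bool) (n : ℕ) : Polynomial ℂ := ∏ j ∈ aSet c n, wA α j
/-- π̌_n^β = ∏_{j∈𝕓_n} ϖ_j -/
def pidB (α : ℕ → ℂ) (c : ℕ → Bool) (n : ℕ) : Polynomial ℂ := ∏ j ∈ bSet c n, wB α j
/-- ∏_{j∈𝕓_n}(z − β_j), a factor being −1 when β_j = ∞ -/
def dB (α : ℕ → ℂ) (c : ℕ → Bool) (n : ℕ) : Polynomial ℂ :=
  ∏ j ∈ bSet c n,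
    (if α j = 0 then (-1 : Polynomial ℂ) else Polynomial.X - Polynomial.C ((conj' (α j))⁻¹))
/-- ∏_{j∈𝕒_n}(z − α_j) -/
def dA (α : ℕ → ℂ) (c : ℕ → Bool) (n : ℕ) : Polynomial ℂ :=
  ∏ j ∈ aSet c n, (Polynomial.X - Polynomial.C (α j))

/-- ς̌_n^α = ∏_{j∈𝕒_n} σ_j -/
def sigcA (α : ℕ → ℂ) (c : ℕ → Bool) (n : ℕ) : ℂ := ∏ j ∈ aSet c n, sig α j
/-- ς̌_n^β = ∏_{j∈𝕓_n} σ_j -/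
def sigcB (α : ℕ → ℂ) (c : ℕ → Bool) (n : ℕ) : ℂ := ∏ j ∈ bSet c n, sig α j

/-- normalization for the γ-sequence: (φ_n^*/B̌_n^β)(α_n) > 0 when γ_n = α_n and
(φ_n^*/B̌_n^α)(β_n) > 0 when γ_n = β_n, written via the identities
φ_n^*/B̌_n^β = ς̌_n^α p_n^*/(π̌_n^α ∏_{j∈𝕓_n}(z−β_j)) and
φ_n^*/B̌_n^α = ς̌_n^β p_n^*/(π̌_n^β ∏_{j∈𝕒_n}(z−α_j)) (the value at β_n = ∞ being the
limit, i.e. the ratio of the coefficients of z^n). -/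
def normG (α : ℕ → ℂ) (c : ℕ → Bool) (p : ℕ → Polynomial ℂ) (n : ℕ) : Prop :=
  if c n then
    posR (sigcA α c n * (pstar n (p n)).eval (α n) /
      ((pidA α c n).eval (α n) * (dB α c n).eval (α n)))
  else if α n = 0 then
    posR (sigcB α c n * (pstar n (p n)).coeff n / ((pidB α c n) * dA α c n).coeff n)
  else
    posR (sigcB α c n * (pstar n (p n)).eval ((conj' (α n))⁻¹) /
      ((pidB α c n) * dA α c n).eval ((conj' (α n))⁻¹))

/-- the reproducing kernel k_n(z,w) = Σ_{k=0}^n φ_k(z) conj(φ_k(w)) -/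
def ker (φ : ℕ → ℂ → ℂ) (n : ℕ) (z w : ℂ) : ℂ :=
  ∑ k ∈ Finset.range (n + 1), φ k z * conj' (φ k w)

/-- evaluation of a polynomial of degree ≤ m at γ_j (its coefficient of z^m when γ_j = ∞) -/
def gEval (α : ℕ → ℂ) (c : ℕ → Bool) (m j : ℕ) (q : Polynomial ℂ) : ℂ :=
  if c j then q.eval (α j)
  else if α j = 0 then q.coeff m
  else q.eval ((conj' (α j))⁻¹)

/-- evaluation of a polynomial of degree ≤ m at β_j (its coefficient of z^m when β_j = ∞) -/
def bEval (α : ℕ → ℂ) (m j : ℕ) (q : Polynomial ℂ) : ℂ :=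
  if α j = 0 then q.coeff m else q.eval ((conj' (α j))⁻¹)

/-- η_n^α (the unimodular constant in the Szegő parameter λ_n^α) -/
def etaA (α : ℕ → ℂ) (p : ℕ → Polynomial ℂ) (n : ℕ) : ℂ :=
  conj' (sigProd α (n - 2)) * conj' ((pstar (n - 1) (p (n - 1))).eval (α (n - 1))) /
    ((pstar (n - 1) (p (n - 1))).eval (α (n - 1)))

/-- the Szegő parameter λ_n^α -/
def lamA (α : ℕ → ℂ) (p : ℕ → Polynomial ℂ) (n : ℕ) : ℂ :=
  etaA α p n * (p n).eval (α (n - 1)) / conj' ((pstar n (p n)).eval (α (n - 1)))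

/-- η_n^β -/
def etaB (α : ℕ → ℂ) (p : ℕ → Polynomial ℂ) (n : ℕ) : ℂ :=
  conj' (sigProd α (n - 2)) * conj' (bEval α (n - 1) (n - 1) (pstar (n - 1) (p (n - 1)))) /
    (bEval α (n - 1) (n - 1) (pstar (n - 1) (p (n - 1))))

/-- the Szegő parameter λ_n^β -/
def lamB (α : ℕ → ℂ) (p : ℕ → Polynomial ℂ) (n : ℕ) : ℂ :=
  etaB α p n * bEval α n (n - 1) (p n) / conj' (bEval α n (n - 1) (pstar n (p n)))

/-- η_n = η_n^γ -/
def etaG (α : ℕ → ℂ) (c : ℕ → Bool) (p : ℕ → Polynomial ℂ) (n : ℕ) : ℂ :=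
  conj' (sigProd α (n - 2)) * conj' (gEval α c (n - 1) (n - 1) (pstar (n - 1) (p (n - 1)))) /
    (gEval α c (n - 1) (n - 1) (pstar (n - 1) (p (n - 1))))

/-- the Szegő parameter λ_n = λ_n^γ -/
def lamG (α : ℕ → ℂ) (c : ℕ → Bool) (p : ℕ → Polynomial ℂ) (n : ℕ) : ℂ :=
  etaG α c p n * gEval α c n (n - 1) (p n) / conj' (gEval α c n (n - 1) (pstar n (p n)))

/-- functions of the second kind: ψ(z) = ∫ E(t,z) φ(t) − D(t,z) φ(z) dμ(t) -/
def psi (μ : Measure ℂ) (φ : ℂ → ℂ) (z : ℂ) : ℂ :=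
  ∫ t, (2 * t / (t - z)) * φ t - ((t + z) / (t - z)) * φ z ∂μ

/-- ∏_{j=k+1}^n ϖ_j -/
def tailProd (α : ℕ → ℂ) (c : ℕ → Bool) (n k : ℕ) : Polynomial ℂ :=
  ∏ j ∈ Finset.Icc (k + 1) n, wG α c j

/-- the numerator C_n(z,w) of the kernel k_n = C_n/(π_n(z) conj(π_n(w))), as a polynomial
in w after conjugation: C_n(z,w) = conj((CnPoly n z).eval w) -/
def CnPoly (α : ℕ → ℂ) (c : ℕ → Bool) (p : ℕ → Polynomial ℂ) (n : ℕ) (z : ℂ) : Polynomial ℂ :=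
  ∑ k ∈ Finset.range (n + 1),
    Polynomial.C (conj' ((p k).eval z * (tailProd α c n k).eval z)) * ((p k) * tailProd α c n k)

/-- z ↦ C_n(z,∞) (the coefficient of w^n of w ↦ C_n(z,w)), as a polynomial in z -/
def CnInf (α : ℕ → ℂ) (c : ℕ → Bool) (p : ℕ → Polynomial ℂ) (n : ℕ) : Polynomial ℂ :=
  ∑ k ∈ Finset.range (n + 1),
    ((p k) * tailProd α c n k) * Polynomial.C (conj' (((p k) * tailProd α c n k).coeff n))

/-- ϖ_n^*(z) = z − γ_n (= −1 when γ_n = ∞) -/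
def wstarG (α : ℕ → ℂ) (c : ℕ → Bool) (n : ℕ) : Polynomial ℂ :=
  if c n then Polynomial.X - Polynomial.C (α n)
  else if α n = 0 then -1
  else Polynomial.X - Polynomial.C ((conj' (α n))⁻¹)

open Polynomial

lemma setOf_onT_eq_sphere : {z : ℂ | onT z} = Metric.sphere 0 1 := by
  ext z; simp [onT]

lemma conj'_mul_self_of_onT {z : ℂ} (hz : onT z) : conj' z * z = 1 := by
  rw [conj', ← Complex.normSq_eq_conj_mul_self, Complex.normSq_eq_norm_sq, hz]
  norm_num

lemma setOf_onT_infinite : {z : ℂ | onT z}.Infinite := by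
  rw [setOf_onT_eq_sphere]
  refine (isPreconnected_sphere (by simp [Complex.rank_real_complex]) 0 1).infinite_of_nontrivial
    ⟨1, by simp, -1, by simp, by norm_num⟩

lemma exists_norm_eq_one_conj'_mul_eq_norm (m : ℂ) : ∃ σ : ℂ, ‖σ‖ = 1 ∧ conj' σ * m = ‖m‖ := by
  rcases eq_or_ne m 0 with rfl | hm
  · exact ⟨1, by simp, by simp⟩
  · refine ⟨m / ‖m‖, by simp [hm], ?_⟩
    rw [conj', map_div₀, Complex.conj_ofReal, div_mul_eq_mul_div,
      ← Complex.normSq_eq_conj_mul_self, Complex.normSq_eq_norm_sq]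
    have : (‖m‖ : ℂ) ≠ 0 := by simpa using hm
    field_simp
    push_cast
    ring

namespace CircleMeasure

variable {μ : Measure ℂ}

lemma ae_onT (hμ : CircleMeasure μ) : ∀ᵐ z ∂μ, onT z :=
  ae_iff.mpr hμ.circ

lemma integrable_of_continuousOn (hμ : CircleMeasure μ) {E : Type*} [NormedAddCommGroup E]
    {f : ℂ → E} (hf : ContinuousOn f {z | onT z}) : Integrable f μ := by
  have := hμ.prob
  rw [← Measure.restrict_eq_self_of_ae_mem hμ.ae_onT]
  refine hf.integrableOn_compact ?_
  rw [setOf_onT_eq_sphere]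
  exact isCompact_sphere 0 1

/-- `μ` charges every open set meeting `𝕋`, in particular the complement of the zero set. -/
lemma integral_pos (hμ : CircleMeasure μ) {d : ℂ → ℝ} (hd : ContinuousOn d {z | onT z})
    (h0 : ∀ z, onT z → 0 ≤ d z) (hfin : {z | onT z ∧ d z = 0}.Finite) :
    0 < ∫ z, d z ∂μ := by
  have hnn : 0 ≤ᵐ[μ] d := hμ.ae_onT.mono h0
  refine (integral_nonneg_of_ae hnn).lt_of_ne fun h => ?_
  have hzero : d =ᵐ[μ] 0 :=
    (integral_eq_zero_iff_of_nonneg_ae hnn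
      (hμ.integrable_of_continuousOn hd)).mp h.symm
  have hae : ∀ᵐ z ∂μ, onT z ∧ d z = 0 := by
    filter_upwards [hμ.ae_onT, hzero] with z hz hdz using ⟨hz, hdz⟩
  obtain ⟨t, htT, htS⟩ := (setOf_onT_infinite.sdiff hfin).nonempty
  refine (hμ.pos _ hfin.isClosed.isOpen_compl ⟨t, htS, htT⟩).ne' ?_
  simpa only [Set.compl_ofPred] using ae_iff.mp hae

/-- Rotate `m₁` to `‖m₁‖ = ∫ Re (σ̄ z) W`; on `𝕋`, `1 - Re (σ̄ z) = |z - σ|² / 2` vanishes only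
at `z = σ`. -/
lemma norm_integral_mul_lt (hμ : CircleMeasure μ) {W : ℂ → ℝ} (hW : ContinuousOn W {z | onT z})
    (h0 : ∀ z, onT z → 0 ≤ W z) (hfin : {z | onT z ∧ W z = 0}.Finite) :
    ‖∫ z, z * (W z : ℂ) ∂μ‖ < ∫ z, W z ∂μ := by
  set m1 := ∫ z, z * (W z : ℂ) ∂μ
  obtain ⟨σ, hσ, hσm⟩ := exists_norm_eq_one_conj'_mul_eq_norm m1
  have hcW : ContinuousOn (fun z : ℂ => (W z : ℂ)) {z | onT z} :=
    Complex.continuous_ofReal.comp_continuousOn hW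
  have hi1 : Integrable (fun z => conj' σ * (z * (W z : ℂ))) μ :=
    hμ.integrable_of_continuousOn (continuousOn_const.mul (continuousOn_id.mul hcW))
  have hnorm : ‖m1‖ = ∫ z, (conj' σ * z).re * W z ∂μ := by
    have h := congrArg Complex.re hσm
    have hre := integral_re hi1
    simp only [RCLike.re_to_complex] at hre
    rw [Complex.ofReal_re, ← integral_const_mul, ← hre] at h
    rw [← h]
    congr 1
    ext z
    rw [← mul_assoc, Complex.re_mul_ofReal]
  have hdist : ∀ z, onT z → Complex.normSq (z - σ) = 2 * (1 - (conj' σ * z).re) := by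
    intro z hz
    rw [Complex.normSq_sub, Complex.normSq_eq_norm_sq, Complex.normSq_eq_norm_sq, hz, hσ,
      mul_comm z, conj']
    ring
  have hpos : 0 < ∫ z, (1 - (conj' σ * z).re) * W z ∂μ := by
    refine hμ.integral_pos ?_ (fun z hz => ?_) ?_
    · exact (continuousOn_const.sub (Complex.continuous_re.comp_continuousOn
        (continuousOn_const.mul continuousOn_id))).mul hW
    · have := Complex.normSq_nonneg (z - σ)
      rw [hdist z hz] at this
      exact mul_nonneg (by linarith) (h0 z hz)
    · refine (hfin.union (Set.finite_singleton σ)).subset fun z ⟨hz, hd⟩ => ?_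
      rcases mul_eq_zero.mp hd with h | h
      · have := hdist z hz
        rw [h, mul_zero, Complex.normSq_eq_zero, sub_eq_zero] at this
        exact Or.inr this
      · exact Or.inl ⟨hz, h⟩
  have hiW := hμ.integrable_of_continuousOn hW
  have hiRe : Integrable (fun z => (conj' σ * z).re * W z) μ :=
    hμ.integrable_of_continuousOn ((Complex.continuous_re.comp_continuousOn
        (continuousOn_const.mul continuousOn_id)).mul hW)
  simp only [sub_mul, one_mul] at hpos
  rw [integral_sub hiW hiRe, ← hnorm] at hpos
  linarith

lemma exists_moments (hμ : CircleMeasure μ) {g : ℂ → ℂ} (hg : ContinuousOn g {z | onT z})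
    (hfin : {z | onT z ∧ g z = 0}.Finite) :
    ∃ (m0 : ℝ) (m1 : ℂ), ‖m1‖ < m0 ∧ ∀ A B C : ℂ,
      ∫ z, (A * conj' z + B + C * z) * (conj' (g z) * g z) ∂μ = A * conj' m1 + B * m0 + C * m1 := by
  set W : ℂ → ℝ := fun z => Complex.normSq (g z)
  have hW : ContinuousOn W {z | onT z} := Complex.continuous_normSq.comp_continuousOn hg
  have hcW : ContinuousOn (fun z : ℂ => (W z : ℂ)) {z | onT z} :=
    Complex.continuous_ofReal.comp_continuousOn hW
  have hfinW : {z | onT z ∧ W z = 0}.Finite := by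
    simpa only [W, Complex.normSq_eq_zero] using hfin
  refine ⟨∫ z, W z ∂μ, ∫ z, z * (W z : ℂ) ∂μ,
    hμ.norm_integral_mul_lt hW (fun z _ => Complex.normSq_nonneg _) hfinW, fun A B C => ?_⟩
  have hi0 : Integrable (fun z => (W z : ℂ)) μ := hμ.integrable_of_continuousOn hcW
  have hi1 : Integrable (fun z => z * (W z : ℂ)) μ :=
    hμ.integrable_of_continuousOn (continuousOn_id.mul hcW)
  have hi2 : Integrable (fun z => conj' z * (W z : ℂ)) μ :=
    hμ.integrable_of_continuousOn
      ((Complex.continuous_conj.comp_continuousOn continuousOn_id).mul hcW)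
  have hconj : ∫ z, conj' z * (W z : ℂ) ∂μ = conj' (∫ z, z * (W z : ℂ) ∂μ) := by
    rw [conj', ← integral_conj]
    simp [conj', W]
  calc ∫ z, (A * conj' z + B + C * z) * (conj' (g z) * g z) ∂μ
      = ∫ z, (A * (conj' z * (W z : ℂ)) + B * (W z : ℂ) + C * (z * (W z : ℂ))) ∂μ := by
        congr 1; ext z
        rw [conj', conj', ← Complex.normSq_eq_conj_mul_self]
        ring
    _ = A * conj' (∫ z, z * (W z : ℂ) ∂μ) + B * (∫ z, W z ∂μ : ℝ)
          + C * ∫ z, z * (W z : ℂ) ∂μ := by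
        have hiAB : Integrable
            (fun z => A * (conj' z * (W z : ℂ)) + B * (W z : ℂ)) μ :=
          (hi2.const_mul A).add (hi0.const_mul B)
        rw [integral_add hiAB (hi1.const_mul C),
          integral_add (hi2.const_mul A) (hi0.const_mul B),
          integral_const_mul, integral_const_mul,
          integral_const_mul, hconj, integral_complex_ofReal]

end CircleMeasure

section MomentAlgebra

variable {u v m1 z0 : ℂ} {m0 : ℝ}

lemma normSq_mul_sub_mul_sub_normSq (u v m1 : ℂ) (m0 : ℝ) :
    Complex.normSq (u * m0 - v * m1) - Complex.normSq (u * conj' m1 - v * m0)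
      = (Complex.normSq u - Complex.normSq v) * (m0 ^ 2 - Complex.normSq m1) := by
  simp only [Complex.normSq_apply, conj', Complex.sub_re, Complex.sub_im, Complex.mul_re,
    Complex.mul_im, Complex.ofReal_re, Complex.ofReal_im, Complex.conj_re, Complex.conj_im]
  ring

lemma normSq_lt_normSq_of_norm_lt {x y : ℂ} (h : ‖x‖ < ‖y‖) :
    Complex.normSq x < Complex.normSq y := by
  rw [Complex.normSq_eq_norm_sq, Complex.normSq_eq_norm_sq]
  exact pow_lt_pow_left₀ h (norm_nonneg x) two_ne_zero

lemma normSq_lt_sq_of_norm_lt (hm : ‖m1‖ < m0) : Complex.normSq m1 < m0 ^ 2 := by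
  rw [Complex.normSq_eq_norm_sq]
  exact pow_lt_pow_left₀ hm (norm_nonneg m1) two_ne_zero

lemma mul_sub_mul_ne_zero (huv : ‖v‖ < ‖u‖) (hm : ‖m1‖ < m0) : u * m0 - v * m1 ≠ 0 := by
  have h := normSq_mul_sub_mul_sub_normSq u v m1 m0
  have hpos := mul_pos (sub_pos.mpr (normSq_lt_normSq_of_norm_lt huv))
    (sub_pos.mpr (normSq_lt_sq_of_norm_lt hm))
  intro h0
  rw [h0, map_zero] at h
  linarith [Complex.normSq_nonneg (u * conj' m1 - v * m0)]

lemma norm_lt_one_of_conj'_mul_eq (huv : ‖v‖ < ‖u‖) (hm : ‖m1‖ < m0)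
    (h : conj' z0 * (u * m0 - v * m1) = u * conj' m1 - v * m0) : ‖z0‖ < 1 := by
  have hsq := congrArg Complex.normSq h
  rw [Complex.normSq_mul, conj', Complex.normSq_conj] at hsq
  have hid := normSq_mul_sub_mul_sub_normSq u v m1 m0
  have hpos := mul_pos (sub_pos.mpr (normSq_lt_normSq_of_norm_lt huv))
    (sub_pos.mpr (normSq_lt_sq_of_norm_lt hm))
  have hY := Complex.normSq_nonneg (u * conj' m1 - v * m0)
  have hz : Complex.normSq z0 < 1 := by nlinarith
  rw [Complex.normSq_eq_norm_sq] at hz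
  nlinarith [norm_nonneg z0]

lemma one_lt_norm_of_conj'_mul_eq (huv : ‖u‖ < ‖v‖) (hm : ‖m1‖ < m0)
    (h : conj' z0 * (u * m0 - v * m1) = u * conj' m1 - v * m0) : 1 < ‖z0‖ := by
  have hsq := congrArg Complex.normSq h
  rw [Complex.normSq_mul, conj', Complex.normSq_conj] at hsq
  have hid := normSq_mul_sub_mul_sub_normSq u v m1 m0
  have hneg := mul_neg_of_neg_of_pos (sub_neg.mpr (normSq_lt_normSq_of_norm_lt huv))
    (sub_pos.mpr (normSq_lt_sq_of_norm_lt hm))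
  have hX := Complex.normSq_nonneg (u * m0 - v * m1)
  have hz : 1 < Complex.normSq z0 := by nlinarith [Complex.normSq_nonneg z0]
  rw [Complex.normSq_eq_norm_sq] at hz
  nlinarith [norm_nonneg z0]

end MomentAlgebra

section LinearFactors

variable {α : ℕ → ℂ}

lemma eval_ne_zero_of_norm_ne {w : ℂ[X]} {u v : ℂ} (hw : ∀ z, w.eval z = u - v * z)
    (huv : ‖u‖ ≠ ‖v‖) {z : ℂ} (hz : onT z) : w.eval z ≠ 0 := by
  rw [hw, sub_ne_zero]
  rintro rfl
  exact huv (by rw [norm_mul, hz, mul_one])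

lemma exists_wA_eval {j : ℕ} (hα : ‖α j‖ < 1) :
    ∃ u v : ℂ, ‖v‖ < ‖u‖ ∧ ∀ z, (wA α j).eval z = u - v * z :=
  ⟨1, conj' (α j), by simpa [conj'] using hα, fun z => by simp [wA]⟩

lemma exists_wB_eval {j : ℕ} (hα : ‖α j‖ < 1) :
    ∃ u v : ℂ, ‖u‖ < ‖v‖ ∧ ∀ z, (wB α j).eval z = u - v * z := by
  by_cases h : α j = 0
  · exact ⟨0, 1, by simp, fun z => by simp [wB, h]⟩
  · refine ⟨1, (α j)⁻¹, ?_, fun z => by simp [wB, h]⟩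
    rw [norm_inv, norm_one]
    exact (one_lt_inv₀ (norm_pos_iff.mpr h)).mpr hα

lemma exists_wG_eval (hα : ∀ j, ‖α j‖ < 1) (c : ℕ → Bool) (j : ℕ) :
    ∃ u v : ℂ, ‖u‖ ≠ ‖v‖ ∧ ∀ z, (wG α c j).eval z = u - v * z := by
  unfold wG
  split
  · obtain ⟨u, v, huv, hw⟩ := exists_wA_eval (hα j)
    exact ⟨u, v, huv.ne', hw⟩
  · obtain ⟨u, v, huv, hw⟩ := exists_wB_eval (hα j)
    exact ⟨u, v, huv.ne, hw⟩

lemma piG_eval_ne_zero (hα : ∀ j, ‖α j‖ < 1) (c : ℕ → Bool) (n : ℕ) {z : ℂ} (hz : onT z) :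
    (piG α c n).eval z ≠ 0 := by
  rw [piG, eval_prod]
  refine Finset.prod_ne_zero_iff.mpr fun j _ => ?_
  obtain ⟨u, v, huv, hw⟩ := exists_wG_eval hα c j
  exact eval_ne_zero_of_norm_ne hw huv hz

lemma piG_succ (α : ℕ → ℂ) (c : ℕ → Bool) (m : ℕ) :
    piG α c (m + 1) = piG α c m * wG α c (m + 1) :=
  Finset.prod_Icc_succ_top (by omega) _

lemma piA_eq_piG (α : ℕ → ℂ) : piA α = piG α fun _ => true := by
  funext n; simp [piA, piG, wG]

lemma piB_eq_piG (α : ℕ → ℂ) : piB α = piG α fun _ => false := by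
  funext n; simp [piB, piG, wG]

end LinearFactors

def ModulusProportional (P Q : ℂ[X]) : Prop :=
  ∃ K : ℝ, ∀ z, onT z → Complex.normSq (P.eval z) = K * Complex.normSq (Q.eval z)

namespace ModulusProportional

lemma refl (P : ℂ[X]) : ModulusProportional P P := ⟨1, fun _ _ => (one_mul _).symm⟩

lemma prod {s : Finset ℕ} {P Q : ℕ → ℂ[X]} (h : ∀ j ∈ s, ModulusProportional (P j) (Q j)) :
    ModulusProportional (∏ j ∈ s, P j) (∏ j ∈ s, Q j) := by
  choose! K hK using h
  refine ⟨∏ j ∈ s, K j, fun z hz => ?_⟩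
  simp only [eval_prod, map_prod, ← Finset.prod_mul_distrib]
  exact Finset.prod_congr rfl fun j hj => hK j hj z hz

end ModulusProportional

section Moduli

variable {α : ℕ → ℂ} {j : ℕ} {z : ℂ}

lemma normSq_wA_eval (hz : onT z) :
    Complex.normSq ((wA α j).eval z) = Complex.normSq (z - α j) := by
  have h : (wA α j).eval z = z * conj' (z - α j) := by
    have hzz := conj'_mul_self_of_onT hz
    simp only [wA, eval_sub, eval_one, eval_mul, eval_C, eval_X, conj', map_sub] at hzz ⊢
    linear_combination hzz.symm
  rw [h, Complex.normSq_mul, conj', Complex.normSq_conj, Complex.normSq_eq_norm_sq z, hz]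
  ring

lemma normSq_wB_eval (h : α j ≠ 0) :
    Complex.normSq ((wB α j).eval z) = (Complex.normSq (α j))⁻¹ * Complex.normSq (z - α j) := by
  have hw : (wB α j).eval z = (α j)⁻¹ * -(z - α j) := by
    simp only [wB, h, if_false, eval_sub, eval_one, eval_mul, eval_C, eval_X]
    field_simp
    ring
  rw [hw, Complex.normSq_mul, Complex.normSq_inv, Complex.normSq_neg]

lemma modulusProportional_wA_wB (j : ℕ) : ModulusProportional (wA α j) (wB α j) := by
  by_cases h : α j = 0
  · refine ⟨1, fun z hz => ?_⟩
    rw [onT] at hz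
    simp [wA, wB, h, conj', Complex.normSq_eq_norm_sq, hz]
  · refine ⟨Complex.normSq (α j), fun z hz => ?_⟩
    rw [normSq_wA_eval hz, normSq_wB_eval h, ← mul_assoc,
      mul_inv_cancel₀ (Complex.normSq_pos.mpr h).ne', one_mul]

lemma modulusProportional_wB_wA (j : ℕ) : ModulusProportional (wB α j) (wA α j) := by
  by_cases h : α j = 0
  · refine ⟨1, fun z hz => ?_⟩
    rw [onT] at hz
    simp [wA, wB, h, conj', Complex.normSq_eq_norm_sq, hz]
  · exact ⟨(Complex.normSq (α j))⁻¹, fun z hz => by rw [normSq_wA_eval hz, normSq_wB_eval h]⟩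

lemma modulusProportional_piG (c c' : ℕ → Bool) (n : ℕ) :
    ModulusProportional (piG α c n) (piG α c' n) := by
  refine ModulusProportional.prod fun j _ => ?_
  unfold wG
  cases c j <;> cases c' j
  · exact ModulusProportional.refl _
  · exact modulusProportional_wB_wA j
  · exact modulusProportional_wA_wB j
  · exact ModulusProportional.refl _

end Moduli

lemma exists_eq_X_sub_C_mul {p : ℂ[X]} {m : ℕ} {z0 : ℂ} (hz0 : p.IsRoot z0)
    (hdeg : p.natDegree ≤ m + 1) : ∃ q : ℂ[X], q.natDegree ≤ m ∧ p = (X - C z0) * q := by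
  refine ⟨p /ₘ (X - C z0), ?_, (mul_divByMonic_eq_iff_isRoot.mpr hz0).symm⟩
  rw [natDegree_divByMonic _ (monic_X_sub_C z0), natDegree_X_sub_C]
  omega

lemma continuousOn_eval_div {p E : ℂ[X]} (hE : ∀ z, onT z → E.eval z ≠ 0) :
    ContinuousOn (fun z => p.eval z / E.eval z) {z | onT z} :=
  p.continuous.continuousOn.div E.continuous.continuousOn hE

lemma conj'_mul_div_mul_div (x Q d e : ℂ) :
    conj' (x * Q / (d * e)) * (Q / d) = conj' x * e * (conj' (Q / (d * e)) * (Q / (d * e))) := by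
  rcases eq_or_ne d 0 with rfl | hd
  · simp
  rcases eq_or_ne e 0 with rfl | he
  · simp [conj']
  have hd' : conj' d ≠ 0 := by simpa [conj'] using hd
  have he' : conj' e ≠ 0 := by simpa [conj'] using he
  simp only [conj', map_div₀, map_mul] at hd' he' ⊢
  field_simp

lemma natDegree_le_of_coeff_succ_eq_zero {s : ℂ[X]} {m : ℕ} (hs : s.natDegree ≤ m + 1)
    (h0 : s.coeff (m + 1) = 0) : s.natDegree ≤ m :=
  natDegree_le_iff_coeff_eq_zero.mpr fun N hN => by
    rcases (Nat.succ_le_of_lt hN).eq_or_lt with rfl | hlt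
    · exact h0
    · exact coeff_eq_zero_of_natDegree_lt (hs.trans_lt hlt)

/-- `κ` matches the values at the zero of `w`, or the top coefficients if `w` is constant. -/
lemma exists_sub_C_mul_eq_mul {w p q : ℂ[X]} {u v : ℂ} {m : ℕ} (hw : ∀ z, w.eval z = u - v * z)
    (huv : ‖u‖ ≠ ‖v‖) (hp : ∀ r : ℂ[X], r.natDegree ≤ m → p ≠ w * r)
    (hpdeg : p.natDegree ≤ m + 1) (hqdeg : q.natDegree ≤ m + 1) :
    ∃ (κ : ℂ) (r : ℂ[X]), r.natDegree ≤ m ∧ q - C κ * p = w * r := by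
  have hdeg : ∀ κ, (q - C κ * p).natDegree ≤ m + 1 := fun κ =>
    (natDegree_sub_le _ _).trans (max_le hqdeg ((natDegree_C_mul_le _ _).trans hpdeg))
  rcases eq_or_ne v 0 with rfl | hv
  · have hu : u ≠ 0 := by rintro rfl; simp at huv
    have hmul : ∀ s : ℂ[X], s = w * (C u⁻¹ * s) := fun s => by
      rw [show w = C u from Polynomial.funext fun z => by simp [hw], ← mul_assoc, ← C_mul,
        mul_inv_cancel₀ hu, C_1, one_mul]
    have hpm : p.coeff (m + 1) ≠ 0 := fun h0 =>
      hp _ ((natDegree_C_mul_le _ _).trans (natDegree_le_of_coeff_succ_eq_zero hpdeg h0))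
        (hmul p)
    set κ := q.coeff (m + 1) / p.coeff (m + 1)
    refine ⟨κ, C u⁻¹ * (q - C κ * p), (natDegree_C_mul_le _ _).trans
      (natDegree_le_of_coeff_succ_eq_zero (hdeg κ) ?_), hmul _⟩
    rw [coeff_sub, coeff_C_mul, div_mul_cancel₀ _ hpm, sub_self]
  · set ρ := u / v
    have hX : X - C ρ = w * C (-v)⁻¹ := Polynomial.funext fun z => by
      simp only [eval_sub, eval_X, eval_C, eval_mul, hw, ρ]
      field_simp
      ring
    have hroot : ∀ s : ℂ[X], s.natDegree ≤ m + 1 → s.IsRoot ρ →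
        ∃ r : ℂ[X], r.natDegree ≤ m ∧ s = w * r := fun s hs hρ => by
      obtain ⟨t, ht, rfl⟩ := exists_eq_X_sub_C_mul hρ hs
      exact ⟨C (-v)⁻¹ * t, (natDegree_C_mul_le _ _).trans ht, by rw [hX, mul_assoc]⟩
    have hpρ : p.eval ρ ≠ 0 := fun h0 => by
      obtain ⟨r, hr, hpr⟩ := hroot p hpdeg h0
      exact hp r hr hpr
    set κ := q.eval ρ / p.eval ρ
    obtain ⟨r, hr, hqr⟩ := hroot (q - C κ * p) (hdeg κ) (by
      simp [IsRoot, κ, div_mul_cancel₀ _ hpρ])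
    exact ⟨κ, r, hr, hqr⟩

/-- With `D = π_m`, this says `f ⊥ L_m`. -/
def IsOrthRat (μ : Measure ℂ) (D : ℂ[X]) (m : ℕ) (f : ℂ → ℂ) : Prop :=
  ∀ r : ℂ[X], r.natDegree ≤ m → inn μ f (fun z => r.eval z / D.eval z) = 0

namespace IsOrthRat

variable {μ : Measure ℂ} {D w : ℂ[X]} {m : ℕ} {u v : ℂ}

/-- On `𝕋` the pairing with `q / D` is `∫ (ā z̄ + b̄)(u - v z) |q / (D w)|² dμ`, and `z̄ z = 1`
makes it a combination of the mass and first moment of `|q / (D w)|² dμ`. -/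
lemma exists_moments (hμ : CircleMeasure μ) (hD : ∀ z, onT z → D.eval z ≠ 0)
    (hw : ∀ z, w.eval z = u - v * z) (huv : ‖u‖ ≠ ‖v‖) {a b : ℂ} {q : ℂ[X]} (hq : q ≠ 0)
    (hqdeg : q.natDegree ≤ m)
    (h : IsOrthRat μ D m (fun z => ((C a * X + C b) * q).eval z / (D * w).eval z)) :
    ∃ (m0 : ℝ) (m1 : ℂ), ‖m1‖ < m0 ∧
      conj' a * (u * conj' m1 - v * m0) + conj' b * (u * m0 - v * m1) = 0 := by
  have hE : ∀ z, onT z → (D * w).eval z ≠ 0 := fun z hz => by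
    rw [eval_mul]; exact mul_ne_zero (hD z hz) (eval_ne_zero_of_norm_ne hw huv hz)
  have hfin : {z | onT z ∧ q.eval z / (D * w).eval z = 0}.Finite :=
    (q.finite_setOfPred_isRoot hq).subset fun z ⟨hz, h0⟩ =>
      (div_eq_zero_iff.mp h0).resolve_right (hE z hz)
  obtain ⟨m0, m1, hm, hmom⟩ := hμ.exists_moments (continuousOn_eval_div hE) hfin
  refine ⟨m0, m1, hm, ?_⟩
  have hpt : ∀ z, onT z →
      conj' (((C a * X + C b) * q).eval z / (D * w).eval z) * (q.eval z / D.eval z)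
        = (conj' a * u * conj' z + (conj' b * u - conj' a * v) + -(conj' b * v) * z)
          * (conj' (q.eval z / (D * w).eval z) * (q.eval z / (D * w).eval z)) := by
    intro z hz
    have hzz := conj'_mul_self_of_onT hz
    rw [eval_mul, eval_mul (p := D), conj'_mul_div_mul_div, hw]
    simp only [eval_add, eval_mul, eval_C, eval_X, conj', map_add, map_mul] at hzz ⊢
    linear_combination (-(starRingEnd ℂ) a * v
      * (starRingEnd ℂ) (q.eval z / (D.eval z * (u - v * z)))
      * (q.eval z / (D.eval z * (u - v * z)))) * hzz
  calc conj' a * (u * conj' m1 - v * m0) + conj' b * (u * m0 - v * m1)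
      = conj' a * u * conj' m1 + (conj' b * u - conj' a * v) * m0 + -(conj' b * v) * m1 := by
        ring
    _ = inn μ (fun z => ((C a * X + C b) * q).eval z / (D * w).eval z)
          (fun z => q.eval z / D.eval z) := by
        rw [← hmom, inn]
        exact integral_congr_ae (hμ.ae_onT.mono fun z hz => (hpt z hz).symm)
    _ = 0 := h q hqdeg

lemma exists_moments_of_isRoot (hμ : CircleMeasure μ) (hD : ∀ z, onT z → D.eval z ≠ 0)
    (hw : ∀ z, w.eval z = u - v * z) (huv : ‖u‖ ≠ ‖v‖) {p : ℂ[X]} (hp : p ≠ 0)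
    (hdeg : p.natDegree ≤ m + 1) (h : IsOrthRat μ D m (fun z => p.eval z / (D * w).eval z))
    {z0 : ℂ} (hz0 : p.IsRoot z0) :
    ∃ (m0 : ℝ) (m1 : ℂ), ‖m1‖ < m0 ∧ conj' z0 * (u * m0 - v * m1) = u * conj' m1 - v * m0 := by
  obtain ⟨q, hqdeg, rfl⟩ := exists_eq_X_sub_C_mul hz0 hdeg
  rw [show X - C z0 = C 1 * X + C (-z0) by simp [sub_eq_add_neg]] at h
  obtain ⟨m0, m1, hm, hid⟩ := h.exists_moments hμ hD hw huv (right_ne_zero_of_mul hp) hqdeg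
  refine ⟨m0, m1, hm, ?_⟩
  simp only [conj', map_one, map_neg] at hid ⊢
  linear_combination -hid

lemma norm_lt_one_of_isRoot (hμ : CircleMeasure μ) (hD : ∀ z, onT z → D.eval z ≠ 0)
    (hw : ∀ z, w.eval z = u - v * z) (huv : ‖v‖ < ‖u‖) {p : ℂ[X]} (hp : p ≠ 0)
    (hdeg : p.natDegree ≤ m + 1) (h : IsOrthRat μ D m (fun z => p.eval z / (D * w).eval z))
    {z0 : ℂ} (hz0 : p.IsRoot z0) : ‖z0‖ < 1 := by
  obtain ⟨m0, m1, hm, hid⟩ := h.exists_moments_of_isRoot hμ hD hw huv.ne' hp hdeg hz0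
  exact norm_lt_one_of_conj'_mul_eq huv hm hid

lemma one_lt_norm_of_isRoot (hμ : CircleMeasure μ) (hD : ∀ z, onT z → D.eval z ≠ 0)
    (hw : ∀ z, w.eval z = u - v * z) (huv : ‖u‖ < ‖v‖) {p : ℂ[X]} (hp : p ≠ 0)
    (hdeg : p.natDegree ≤ m + 1) (h : IsOrthRat μ D m (fun z => p.eval z / (D * w).eval z))
    {z0 : ℂ} (hz0 : p.IsRoot z0) : 1 < ‖z0‖ := by
  obtain ⟨m0, m1, hm, hid⟩ := h.exists_moments_of_isRoot hμ hD hw huv.ne hp hdeg hz0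
  exact one_lt_norm_of_conj'_mul_eq huv hm hid

lemma natDegree_eq (hμ : CircleMeasure μ) (hD : ∀ z, onT z → D.eval z ≠ 0)
    (hw : ∀ z, w.eval z = u - v * z) (huv : ‖v‖ < ‖u‖) {p : ℂ[X]} (hp : p ≠ 0)
    (hdeg : p.natDegree ≤ m + 1) (h : IsOrthRat μ D m (fun z => p.eval z / (D * w).eval z)) :
    p.natDegree = m + 1 := by
  refine hdeg.antisymm (not_lt.mp fun hlt => ?_)
  rw [show p = (C 0 * X + C 1) * p by simp] at h
  obtain ⟨m0, m1, hm, hid⟩ :=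
    h.exists_moments hμ hD hw huv.ne' hp (Nat.le_of_lt_succ hlt)
  simp only [conj', map_zero, map_one, zero_mul, zero_add, one_mul] at hid
  exact mul_sub_mul_ne_zero huv hm hid

/-- Here `f = r / D` lies in `L_m`, so it is orthogonal to itself. -/
lemma eq_zero_of_eq_mul (hμ : CircleMeasure μ) (hD : ∀ z, onT z → D.eval z ≠ 0)
    (hw : ∀ z, onT z → w.eval z ≠ 0) {r : ℂ[X]} (hr : r.natDegree ≤ m)
    (h : IsOrthRat μ D m (fun z => (w * r).eval z / (D * w).eval z)) : r = 0 := by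
  by_contra hr0
  have hfin : {z | onT z ∧ r.eval z / D.eval z = 0}.Finite :=
    (r.finite_setOfPred_isRoot hr0).subset fun z ⟨hz, h0⟩ =>
      (div_eq_zero_iff.mp h0).resolve_right (hD z hz)
  obtain ⟨m0, m1, hm, hmom⟩ := hμ.exists_moments (continuousOn_eval_div hD) hfin
  have hm0 : (m0 : ℂ) = 0 :=
    calc (m0 : ℂ)
        = ∫ z, (0 * conj' z + 1 + 0 * z) * (conj' (r.eval z / D.eval z) * (r.eval z / D.eval z)) ∂μ
          := by rw [hmom]; simp
      _ = inn μ (fun z => (w * r).eval z / (D * w).eval z) (fun z => r.eval z / D.eval z) :=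
          integral_congr_ae (hμ.ae_onT.mono fun z hz => by
            simp only [eval_mul]
            rw [mul_comm (w.eval z), mul_div_mul_right _ _ (hw z hz)]
            ring)
      _ = 0 := h r hr
  exact ((norm_nonneg m1).trans_lt hm).ne' (by exact_mod_cast hm0)

lemma sub_C_mul (hμ : CircleMeasure μ) (hD : ∀ z, onT z → D.eval z ≠ 0) {E p q : ℂ[X]}
    (hE : ∀ z, onT z → E.eval z ≠ 0) (hp : IsOrthRat μ D m (fun z => p.eval z / E.eval z))
    (hq : IsOrthRat μ D m (fun z => q.eval z / E.eval z)) (κ : ℂ) :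
    IsOrthRat μ D m (fun z => (q - C κ * p).eval z / E.eval z) := by
  intro r hr
  have hi : ∀ s : ℂ[X],
      Integrable (fun z => conj' (s.eval z / E.eval z) * (r.eval z / D.eval z)) μ :=
    fun s => hμ.integrable_of_continuousOn ((Complex.continuous_conj.comp_continuousOn
      (continuousOn_eval_div hE)).mul (continuousOn_eval_div hD))
  have hp0 := hp r hr
  have hq0 := hq r hr
  unfold inn at hp0 hq0 ⊢
  calc ∫ z, conj' ((q - C κ * p).eval z / E.eval z) * (r.eval z / D.eval z) ∂μ
      = ∫ z, (conj' (q.eval z / E.eval z) * (r.eval z / D.eval z)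
          - conj' κ * (conj' (p.eval z / E.eval z) * (r.eval z / D.eval z))) ∂μ := by
        congr 1; ext z
        simp only [eval_sub, eval_mul, eval_C, conj', map_div₀, map_sub, map_mul]
        ring
    _ = 0 := by
        rw [integral_sub (hi q) ((hi p).const_mul _),
          integral_const_mul, hp0, hq0, mul_zero, sub_zero]

lemma exists_eq_C_mul (hμ : CircleMeasure μ) (hD : ∀ z, onT z → D.eval z ≠ 0)
    (hw : ∀ z, w.eval z = u - v * z) (huv : ‖u‖ ≠ ‖v‖) {p q : ℂ[X]} (hp : p ≠ 0)
    (hpdeg : p.natDegree ≤ m + 1) (hqdeg : q.natDegree ≤ m + 1)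
    (hpo : IsOrthRat μ D m (fun z => p.eval z / (D * w).eval z))
    (hqo : IsOrthRat μ D m (fun z => q.eval z / (D * w).eval z)) :
    ∃ κ : ℂ, q = C κ * p := by
  have hw0 : ∀ z, onT z → w.eval z ≠ 0 := fun z hz => eval_ne_zero_of_norm_ne hw huv hz
  have hE : ∀ z, onT z → (D * w).eval z ≠ 0 := fun z hz => by
    rw [eval_mul]; exact mul_ne_zero (hD z hz) (hw0 z hz)
  have hnot : ∀ r : ℂ[X], r.natDegree ≤ m → p ≠ w * r := by
    rintro r hr rfl
    exact hp (by rw [hpo.eq_zero_of_eq_mul hμ hD hw0 hr, mul_zero])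
  obtain ⟨κ, r, hr, hqr⟩ := exists_sub_C_mul_eq_mul hw huv hnot hpdeg hqdeg
  have hd := hpo.sub_C_mul hμ hD hE hqo κ
  rw [hqr] at hd
  rw [hd.eq_zero_of_eq_mul hμ hD hw0 hr, mul_zero, sub_eq_zero] at hqr
  exact ⟨κ, hqr⟩

lemma of_modulusProportional (hμ : CircleMeasure μ) {D' : ℂ[X]}
    (hD : ∀ z, onT z → D.eval z ≠ 0) (hD' : ∀ z, onT z → D'.eval z ≠ 0)
    (hDD' : ModulusProportional D D') {p : ℂ[X]}
    (h : IsOrthRat μ D m (fun z => p.eval z / (D * w).eval z)) :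
    IsOrthRat μ D' m (fun z => p.eval z / (D' * w).eval z) := by
  obtain ⟨K, hK⟩ := hDD'
  intro r hr
  have h0 := h r hr
  unfold inn at h0 ⊢
  calc ∫ z, conj' (p.eval z / (D' * w).eval z) * (r.eval z / D'.eval z) ∂μ
      = ∫ z, (K : ℂ) * (conj' (p.eval z / (D * w).eval z) * (r.eval z / D.eval z)) ∂μ :=
        integral_congr_ae (hμ.ae_onT.mono fun z hz => ?_)
    _ = 0 := by rw [integral_const_mul, h0, mul_zero]
  have hKz : conj' (D.eval z) * D.eval z = K * (conj' (D'.eval z) * D'.eval z) := by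
    simpa only [conj', Complex.normSq_eq_conj_mul_self, Complex.ofReal_mul]
      using congrArg (fun x : ℝ => (x : ℂ)) (hK z hz)
  have hDz := hD z hz
  have hD'z := hD' z hz
  rcases eq_or_ne (w.eval z) 0 with hwz | hwz
  · simp [hwz, conj']
  have hcD : conj' (D.eval z) ≠ 0 := by simpa [conj'] using hDz
  have hcD' : conj' (D'.eval z) ≠ 0 := by simpa [conj'] using hD'z
  have hcw : conj' (w.eval z) ≠ 0 := by simpa [conj'] using hwz
  simp only [eval_mul, conj', map_div₀, map_mul] at hKz hcD hcD' hcw ⊢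
  field_simp
  linear_combination (starRingEnd ℂ (p.eval z) * r.eval z) * hKz

end IsOrthRat

namespace IsORF

variable {μ : Measure ℂ} {pip : ℕ → ℂ[X]} {φ : ℕ → ℂ → ℂ} {p : ℕ → ℂ[X]}

lemma ne_zero (h : IsORF μ pip φ p) (n : ℕ) : p n ≠ 0 := by
  intro h0
  have := h.norm n
  simp [inn, h.rep, h0] at this

lemma isOrthRat (h : IsORF μ pip φ p) (m : ℕ) :
    IsOrthRat μ (pip m) m (fun z => (p (m + 1)).eval z / (pip (m + 1)).eval z) := by
  intro r hr
  rw [← funext (h.rep (m + 1))]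
  exact h.orth (m + 1) (by omega) _ ⟨r, hr, fun z _ => rfl⟩

variable {α : ℕ → ℂ} {c : ℕ → Bool}

lemma isOrthRat_piG (h : IsORF μ (piG α c) φ p) (m : ℕ) :
    IsOrthRat μ (piG α c m) m
      (fun z => (p (m + 1)).eval z / (piG α c m * wG α c (m + 1)).eval z) := by
  rw [← piG_succ]
  exact h.isOrthRat m

theorem norm_lt_one_of_isRoot (hμ : CircleMeasure μ) (hα : ∀ j, ‖α j‖ < 1)
    (h : IsORF μ (piG α c) φ p) {n : ℕ} (hc : c n = true) {z : ℂ} (hz : (p n).IsRoot z) :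
    ‖z‖ < 1 := by
  cases n with
  | zero => simp [h.p0] at hz
  | succ m =>
    obtain ⟨u, v, huv, hw⟩ := exists_wA_eval (hα (m + 1))
    have ho := h.isOrthRat_piG m
    rw [wG, if_pos hc] at ho
    exact ho.norm_lt_one_of_isRoot hμ (fun _ => piG_eval_ne_zero hα c m) hw huv (h.ne_zero _)
      (h.deg _) hz

theorem natDegree_eq (hμ : CircleMeasure μ) (hα : ∀ j, ‖α j‖ < 1)
    (h : IsORF μ (piG α c) φ p) {n : ℕ} (hc : c n = true) : (p n).natDegree = n := by
  cases n with
  | zero => simp [h.p0]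
  | succ m =>
    obtain ⟨u, v, huv, hw⟩ := exists_wA_eval (hα (m + 1))
    have ho := h.isOrthRat_piG m
    rw [wG, if_pos hc] at ho
    exact ho.natDegree_eq hμ (fun _ => piG_eval_ne_zero hα c m) hw huv (h.ne_zero _) (h.deg _)

theorem one_lt_norm_of_isRoot (hμ : CircleMeasure μ) (hα : ∀ j, ‖α j‖ < 1)
    (h : IsORF μ (piG α c) φ p) {n : ℕ} (hc : c n = false) {z : ℂ} (hz : (p n).IsRoot z) :
    1 < ‖z‖ := by
  cases n with
  | zero => simp [h.p0] at hz
  | succ m =>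
    obtain ⟨u, v, huv, hw⟩ := exists_wB_eval (hα (m + 1))
    have ho := h.isOrthRat_piG m
    rw [wG, if_neg (by simp [hc])] at ho
    exact ho.one_lt_norm_of_isRoot hμ (fun _ => piG_eval_ne_zero hα c m) hw huv (h.ne_zero _)
      (h.deg _) hz

/-- On `𝕋` the denominators `π_{n-1}` for different choices of `γ` have proportional moduli. -/
theorem exists_eq_C_mul (hμ : CircleMeasure μ) (hα : ∀ j, ‖α j‖ < 1) {c' : ℕ → Bool}
    {φ' : ℕ → ℂ → ℂ} {p' : ℕ → ℂ[X]} (h : IsORF μ (piG α c) φ p)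
    (h' : IsORF μ (piG α c') φ' p') {n : ℕ} (hc : c n = c' n) :
    ∃ κ : ℂ, κ ≠ 0 ∧ p' n = C κ * p n := by
  cases n with
  | zero => exact ⟨1, one_ne_zero, by rw [h.p0, h'.p0, C_1, one_mul]⟩
  | succ m =>
    obtain ⟨u, v, huv, hw⟩ := exists_wG_eval hα c (m + 1)
    have hD : ∀ z, onT z → (piG α c m).eval z ≠ 0 := fun _ => piG_eval_ne_zero hα c m
    have ho' := h'.isOrthRat_piG m
    rw [show wG α c' (m + 1) = wG α c (m + 1) by simp only [wG, hc]] at ho'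
    obtain ⟨κ, hκ⟩ := (h.isOrthRat_piG m).exists_eq_C_mul hμ hD hw huv (h.ne_zero _) (h.deg _)
      (h'.deg _) (ho'.of_modulusProportional hμ (fun _ => piG_eval_ne_zero hα c' m) hD
        (modulusProportional_piG c' c m))
    exact ⟨κ, fun h0 => h'.ne_zero (m + 1) (by rw [hκ, h0, C_0, zero_mul]), hκ⟩

end IsORF

section Reciprocal

variable {n : ℕ} {p : ℂ[X]}

lemma pstar_eval_of_ne_zero (hdeg : p.natDegree ≤ n) {z : ℂ} (hz : z ≠ 0) :
    (pstar n p).eval z = z ^ n * conj' (p.eval (conj' z)⁻¹) := by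
  rw [pstar, eval_finsetSum, eval_eq_sum_range' (Nat.lt_succ_of_le hdeg), conj', map_sum,
    Finset.mul_sum]
  refine Finset.sum_congr rfl fun k hk => ?_
  have hpow : z ^ n = z ^ (n - k) * z ^ k := by
    rw [← pow_add, Nat.sub_add_cancel (Nat.lt_succ_iff.mp (Finset.mem_range.mp hk))]
  simp only [eval_mul, eval_C, eval_pow, eval_X, map_mul, map_pow, map_inv₀, conj',
    Complex.conj_conj, hpow]
  have := pow_ne_zero k hz
  rw [inv_pow]
  field_simp

lemma pstar_eval_zero : (pstar n p).eval 0 = conj' (p.coeff n) := by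
  rw [pstar, eval_finsetSum, Finset.sum_eq_single n]
  · simp
  · intro k hk hkn
    have : n - k ≠ 0 := by have := Finset.mem_range.mp hk; omega
    simp [this]
  · simp

lemma eval_eq_zero_of_pstar_eval_eq_zero (hdeg : p.natDegree ≤ n) {z : ℂ} (hz : z ≠ 0)
    (h : (pstar n p).eval z = 0) : p.eval (conj' z)⁻¹ = 0 := by
  rw [pstar_eval_of_ne_zero hdeg hz] at h
  simpa [conj', hz] using h

lemma one_lt_norm_of_pstar_eval_eq_zero (hp : p ≠ 0) (hdeg : p.natDegree = n)
    (hroots : ∀ z, p.eval z = 0 → ‖z‖ < 1) {z : ℂ} (h : (pstar n p).eval z = 0) : 1 < ‖z‖ := by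
  rcases eq_or_ne z 0 with rfl | hz
  · rw [pstar_eval_zero, ← hdeg, coeff_natDegree] at h
    simp [conj', hp] at h
  · have := hroots _ (eval_eq_zero_of_pstar_eval_eq_zero hdeg.le hz h)
    rwa [norm_inv, conj', Complex.norm_conj, inv_lt_one₀ (norm_pos_iff.mpr hz)] at this

lemma norm_lt_one_of_pstar_eval_eq_zero (hdeg : p.natDegree ≤ n)
    (hroots : ∀ z, p.eval z = 0 → 1 < ‖z‖) {z : ℂ} (h : (pstar n p).eval z = 0) : ‖z‖ < 1 := by
  rcases eq_or_ne z 0 with rfl | hz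
  · simp
  · have := hroots _ (eval_eq_zero_of_pstar_eval_eq_zero hdeg hz h)
    rwa [norm_inv, conj', Complex.norm_conj, one_lt_inv₀ (norm_pos_iff.mpr hz)] at this

end Reciprocal

end ORF

open ORF MeasureTheory

theorem stmt6_general (α : ℕ → ℂ) (hα : ∀ j, ‖α j‖ < 1)
    (c : ℕ → Bool) (μ : Measure ℂ) (hμ : CircleMeasure μ)
    (φA φB φG : ℕ → ℂ → ℂ) (pA pB pG : ℕ → Polynomial ℂ)
    (hA : IsORF μ (piA α) φA pA) (hB : IsORF μ (piB α) φB pB)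
    (hG : IsORF μ (piG α c) φG pG)
    (n : ℕ) :
    (∀ z, (pA n).eval z = 0 → ‖z‖ < 1) ∧
    (∀ z, (pstar n (pA n)).eval z = 0 → 1 < ‖z‖) ∧
    (∀ z, (pB n).eval z = 0 → 1 < ‖z‖) ∧
    (∀ z, (pstar n (pB n)).eval z = 0 → ‖z‖ < 1) ∧
    (c n = true →
      (∀ z, ((pG n).eval z = 0 ↔ (pA n).eval z = 0)) ∧
      (∀ z, (pG n).eval z = 0 → ‖z‖ < 1)) ∧
    (c n = false →
      (∀ z, ((pG n).eval z = 0 ↔ (pB n).eval z = 0)) ∧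
      (∀ z, (pG n).eval z = 0 → 1 < ‖z‖)) := by
  rw [piA_eq_piG] at hA
  rw [piB_eq_piG] at hB
  have zerosA : ∀ z, (pA n).eval z = 0 → ‖z‖ < 1 := fun z =>
    hA.norm_lt_one_of_isRoot hμ hα rfl
  have zerosB : ∀ z, (pB n).eval z = 0 → 1 < ‖z‖ := fun z =>
    hB.one_lt_norm_of_isRoot hμ hα rfl
  have zeros_iff : ∀ {c' : ℕ → Bool} {φ' : ℕ → ℂ → ℂ} {p' : ℕ → Polynomial ℂ},
      IsORF μ (piG α c') φ' p' → c' n = c n → ∀ z, (pG n).eval z = 0 ↔ (p' n).eval z = 0 := by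
    intro c' φ' p' h' hc z
    obtain ⟨κ, hκ, hpG⟩ := h'.exists_eq_C_mul hμ hα hG hc
    simp [hpG, hκ]
  refine ⟨zerosA, fun z => one_lt_norm_of_pstar_eval_eq_zero (hA.ne_zero n)
      (hA.natDegree_eq hμ hα rfl) zerosA, zerosB,
    fun z => norm_lt_one_of_pstar_eval_eq_zero (hB.deg n) zerosB, fun hc => ?_, fun hc => ?_⟩
  · have hiff := zeros_iff hA hc.symm
    exact ⟨hiff, fun z hz => zerosA z ((hiff z).mp hz)⟩
  · have hiff := zeros_iff hB hc.symm
    exact ⟨hiff, fun z hz => zerosB z ((hiff z).mp hz)⟩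

/-- Corollary `cor1`: the zeros of φ_n^α lie in 𝔻 and those of φ_n^{α*}
in 𝔼; the zeros of φ_n^β lie in 𝔼 and those of φ_n^{β*} in 𝔻; moreover the zeros of φ_n
coincide with those of φ_n^α (hence lie in 𝔻) when γ_n = α_n, and with those of φ_n^β
(hence lie in 𝔼) when γ_n = β_n. (The zeros of a rational function are those of its
numerator polynomial.) -/
theorem stmt6 (α : ℕ → ℂ) (hα0 : α 0 = 0) (hα : ∀ j, ‖α j‖ < 1)
    (c : ℕ → Bool) (μ : Measure ℂ) (hμ : CircleMeasure μ)
    (φA φB φG : ℕ → ℂ → ℂ) (pA pB pG : ℕ → Polynomial ℂ)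
    (hA : IsORF μ (piA α) φA pA) (hB : IsORF μ (piB α) φB pB)
    (hG : IsORF μ (piG α c) φG pG)
    (hnA : ∀ n, normA α pA n) (hnB : ∀ n, normB α pB n) (hnG : ∀ n, normG α c pG n)
    (n : ℕ) :
    (∀ z, (pA n).eval z = 0 → ‖z‖ < 1) ∧
    (∀ z, (pstar n (pA n)).eval z = 0 → 1 < ‖z‖) ∧
    (∀ z, (pB n).eval z = 0 → 1 < ‖z‖) ∧
    (∀ z, (pstar n (pB n)).eval z = 0 → ‖z‖ < 1) ∧
    (c n = true →
      (∀ z, ((pG n).eval z = 0 ↔ (pA n).eval z = 0)) ∧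
      (∀ z, (pG n).eval z = 0 → ‖z‖ < 1)) ∧
    (c n = false →
      (∀ z, ((pG n).eval z = 0 ↔ (pB n).eval z = 0)) ∧
      (∀ z, (pG n).eval z = 0 → 1 < ‖z‖)) :=
  stmt6_general α hα c μ hμ φA φB φG pA pB pG hA hB hG n
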